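/- Programs Π₁ and Π₂ are strongly equivalent for dlv — i.e., for every program Δ, the programs Π₁ ∪ Δ and Π₂ ∪ Δ have the same dlv answer sets — if and only if τ^dlv(Π₁) and τ^dlv(Π₂) have the same agg-ht-models over σ(𝒫,𝒮), where 𝒫 and 𝒮 contain all predicate and set symbols occurring in Π₁ ∪ Π₂. -/

import Mathlib

/-! ### Programs with aggregates: syntax -/

/-- Ground program terms: numerals, symbolic constants, `#inf`, `#sup`. -/
inductive PTerm : Type where
  | inf : PTerm
  | num : ℤ → PTerm
  | sym : ℕ → PTerm
  | sup : PTerm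
deriving DecidableEq

/-- The chosen total order on ground program terms: `#inf` least, `#sup` greatest,
numerals ordered as the integers and below all symbolic constants. -/
def PTerm.le : PTerm → PTerm → Prop
  | .inf, _ => True
  | _, .sup => True
  | .sup, _ => False
  | _, .inf => False
  | .num m, .num n => m ≤ n
  | .num _, .sym _ => True
  | .sym _, .num _ => False
  | .sym a, .sym b => a ≤ b

def PTerm.lt (a b : PTerm) : Prop := PTerm.le a b ∧ a ≠ b

/-- Comparison symbols: `=`, `≠`, `<`, `>`, `≤`, `≥`. -/
inductive Cmp : Type where
  | ceq | cneq | clt | cgt | cle | cge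
deriving DecidableEq

def Cmp.holds : Cmp → PTerm → PTerm → Prop
  | .ceq, a, b => a = b
  | .cneq, a, b => a ≠ b
  | .clt, a, b => PTerm.lt a b
  | .cgt, a, b => PTerm.lt b a
  | .cle, a, b => PTerm.le a b
  | .cge, a, b => PTerm.le b a

instance : DecidablePred (Function.uncurry PTerm.le) := by
  rintro ⟨a, b⟩
  cases a <;> cases b <;> simp [Function.uncurry, PTerm.le] <;> infer_instance

instance (a b : PTerm) : Decidable (PTerm.le a b) :=
  inferInstanceAs (Decidable (Function.uncurry PTerm.le (a, b)))

instance (a b : PTerm) : Decidable (PTerm.lt a b) := by unfold PTerm.lt; infer_instance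

instance (c : Cmp) (a b : PTerm) : Decidable (c.holds a b) := by
  cases c <;> simp [Cmp.holds] <;> infer_instance

/-- Program terms: ground terms or program variables (variables are natural
numbers, giving a countably infinite supply; their order is used as the
lexicographic order on variables). -/
inductive PrgTerm : Type where
  | ground : PTerm → PrgTerm
  | var : ℕ → PrgTerm
deriving DecidableEq

/-- An atom `p(t₁,…,tₙ)`. -/
structure Atom : Type where
  pred : ℕ
  args : List PrgTerm
deriving DecidableEq

/-- Atomic formulas: atoms and comparisons. -/
inductive AtomicF : Type where
  | atm : Atom → AtomicF
  | cmp : PrgTerm → Cmp → PrgTerm → AtomicF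
deriving DecidableEq

/-- Zero, one or two occurrences of `not`. -/
inductive Nots : Type where
  | zero | one | two
deriving DecidableEq

/-- A basic literal: an atomic formula preceded by zero, one or two `not`. -/
structure BLit : Type where
  nots : Nots
  af : AtomicF
deriving DecidableEq

/-- An aggregate element `t₁,…,t_k : l₁,…,l_m`. -/
structure AggElem : Type where
  terms : List PrgTerm
  lits : List BLit
deriving DecidableEq

/-- Aggregate operation names. -/
inductive AggOp : Type where
  | count | sum
deriving DecidableEq

/-- An aggregate atom `#op{E} ≺ u`. -/
structure AggAtom : Type where
  op : AggOp
  elem : AggElem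
  rel : Cmp
  guard : PrgTerm
deriving DecidableEq

/-- An aggregate literal: an aggregate atom preceded by zero, one or two `not`. -/
structure AggLit : Type where
  nots : Nots
  agg : AggAtom
deriving DecidableEq

/-- Literals. -/
inductive Lit : Type where
  | basic : BLit → Lit
  | aggr : AggLit → Lit
deriving DecidableEq

/-- A rule `Head :- B₁,…,Bₙ` (`head = none` represents `⊥`, i.e. a constraint). -/
structure Rule : Type where
  head : Option Atom
  body : List Lit
deriving DecidableEq

/-- A program is a set of rules. -/
abbrev Program : Type := Set Rule

/-! ### Variables, global variables, set symbols -/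

def PrgTerm.varsL : PrgTerm → List ℕ
  | .ground _ => []
  | .var v => [v]

def Atom.varsL (a : Atom) : List ℕ :=
  a.args.foldr (fun t acc => t.varsL ++ acc) []

def AtomicF.varsL : AtomicF → List ℕ
  | .atm a => a.varsL
  | .cmp l _ r => l.varsL ++ r.varsL

def BLit.varsL (l : BLit) : List ℕ := l.af.varsL

def AggElem.varsL (e : AggElem) : List ℕ :=
  e.terms.foldr (fun t acc => t.varsL ++ acc) [] ++
  e.lits.foldr (fun l acc => l.varsL ++ acc) []

/-- The variables that are global in a rule: those occurring in a non-aggregate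
literal or in a guard of an aggregate literal. -/
def Rule.globalVarsL (R : Rule) : List ℕ :=
  R.body.foldr (fun l acc =>
    (match l with
      | .basic b => b.varsL
      | .aggr a => a.agg.guard.varsL) ++ acc) []

/-- The lexicographically (i.e. numerically) sorted duplicate-free list of a list
of variables. -/
def sortedL (l : List ℕ) : List ℕ := l.dedup.insertionSort (· ≤ ·)

/-- The sorted list of variables of the rule that are global. -/
def globalVarsSorted (R : Rule) : List ℕ := sortedL R.globalVarsL

/-- For an aggregate element `E` occurring in rule `R`, the lexicographically
ordered list `X` of all variables of `E` that are global in `R`. -/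
def aggX (R : Rule) (E : AggElem) : List ℕ :=
  sortedL (E.varsL.filter (fun v => v ∈ R.globalVarsL))

/-- The lexicographically ordered list `Y` of the variables occurring in `E`
that are not in `X` (the "local" variables). -/
def localsOf (E : AggElem) (X : List ℕ) : List ℕ :=
  sortedL (E.varsL.filter (fun v => v ∉ X))

/-- A set symbol `E/X`. -/
structure SetSymbol : Type where
  elem : AggElem
  gvars : List ℕ
deriving DecidableEq

/-- The set symbols occurring in a program. -/
def ssymsOf (Pi : Program) : Set SetSymbol :=
  { s | ∃ R ∈ Pi, ∃ l : AggLit, Lit.aggr l ∈ R.body ∧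
        s = ⟨l.agg.elem, aggX R l.agg.elem⟩ }

def AtomicF.atomL : AtomicF → List Atom
  | .atm a => [a]
  | .cmp _ _ _ => []

/-- All atoms occurring in a rule (head, basic body literals, and literals inside
aggregate elements). -/
def Rule.atomsL (R : Rule) : List Atom :=
  (match R.head with | some a => [a] | none => []) ++
  R.body.foldr (fun l acc =>
    (match l with
      | .basic b => b.af.atomL
      | .aggr al => al.agg.elem.lits.foldr (fun b acc2 => b.af.atomL ++ acc2) []) ++ acc) []

/-- The predicate symbols (name/arity pairs) occurring in a program. -/
def predsOf (Pi : Program) : Set (ℕ × ℕ) :=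
  { pn | ∃ R ∈ Pi, ∃ a ∈ R.atomsL, pn = (a.pred, a.args.length) }

/-! ### The functions associated with the aggregate names -/

/-- The weight of a tuple of ground terms. -/
def tupleWeight : List PTerm → ℤ
  | (PTerm.num n) :: _ => n
  | _ => 0

open scoped Classical in
/-- `count^`. -/
noncomputable def countHat (Δ : Set (List PTerm)) : PTerm :=
  if h : Δ.Finite then .num h.toFinset.card else .sup

/-- `sum^`: the sum of the weights of the tuples in `Δ` if only finitely many
tuples have non-zero weight, and `0` otherwise. -/
noncomputable def sumHat (Δ : Set (List PTerm)) : PTerm :=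
  .num (∑ᶠ t ∈ Δ, tupleWeight t)

noncomputable def AggOp.hat : AggOp → Set (List PTerm) → PTerm
  | .count => countHat
  | .sum => sumHat

/-! ### Three-sorted signatures and interpretations -/

/-- A three-sorted signature for programs with aggregates: predicate symbols (with
arities), set-valued function symbols, and tuple-forming function symbols.  The
remaining symbols (ground program terms as constants of the general sort, the
comparison predicates, membership `∈`, and `count`/`sum`) are the same in every
such signature and are built into the syntax below. -/
structure ASig : Type 1 where
  PSym : Type
  parity : PSym → ℕ
  SSym : Type
  sarity : SSym → ℕ
  TSym : Type
  tarity : TSym → ℕ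

/-- The universe of the tuple sort: all tuples of elements of the general sort
whose length is the arity of some tuple-forming function. -/
def tupDom (σ : ASig) : Set (List PTerm) :=
  { l | ∃ f : σ.TSym, l.length = σ.tarity f }

mutual
  /-- Ground terms of the general sort (with names of domain elements). -/
  inductive GTm (σ : ASig) : Type where
    | name : PTerm → GTm σ
    | cnt : STm σ → GTm σ
    | sm : STm σ → GTm σ
  /-- Ground terms of the tuple sort. -/
  inductive TTm (σ : ASig) : Type where
    | name : List PTerm → TTm σ
    | tup : (f : σ.TSym) → (Fin (σ.tarity f) → GTm σ) → TTm σ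
  /-- Ground terms of the set sort. -/
  inductive STm (σ : ASig) : Type where
    | name : Set (List PTerm) → STm σ
    | sfn : (f : σ.SSym) → (Fin (σ.sarity f) → GTm σ) → STm σ
end

/-- A standard interpretation of `σ`; the universes of the general and tuple sorts,
the denotations of ground program terms, the comparison predicates, the
tuple-forming functions, `∈`, `count` and `sum` are fixed, so the interpretation is
given by the universe of the set sort together with the denotations of the
predicate symbols and of the set-valued function symbols. -/
structure AInterp (σ : ASig) : Type 1 where
  setDom : Set (Set (List PTerm))
  pr : (p : σ.PSym) → (Fin (σ.parity p) → PTerm) → Prop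
  sfn : (f : σ.SSym) → (Fin (σ.sarity f) → PTerm) → Set (List PTerm)

/-- The remaining conditions for being a standard interpretation: every element of
the set-sort universe is a set of tuples, and the set-valued functions take values
in the set-sort universe. -/
def IsStd {σ : ASig} (I : AInterp σ) : Prop :=
  (∀ s ∈ I.setDom, s ⊆ tupDom σ) ∧ (∀ f a, I.sfn f a ∈ I.setDom)

mutual
  noncomputable def GTm.eval {σ : ASig} (I : AInterp σ) : GTm σ → PTerm
    | .name d => d
    | .cnt s => countHat (s.eval I)
    | .sm s => sumHat (s.eval I)
  noncomputable def TTm.eval {σ : ASig} (I : AInterp σ) : TTm σ → List PTerm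
    | .name d => d
    | .tup _ args => List.ofFn (fun i => (args i).eval I)
  noncomputable def STm.eval {σ : ASig} (I : AInterp σ) : STm σ → Set (List PTerm)
    | .name d => d
    | .sfn f args => I.sfn f (fun i => (args i).eval I)
end

/-- Extended first-order sentences over `σ^I` (quantified bodies are represented
by functions on names of domain elements of the respective sort). -/
inductive AFml (σ : ASig) : Type 1 where
  | patom : (p : σ.PSym) → (Fin (σ.parity p) → GTm σ) → AFml σ
  | cmp : Cmp → GTm σ → GTm σ → AFml σ
  | mem : TTm σ → STm σ → AFml σ
  | teq : TTm σ → TTm σ → AFml σ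
  | seq : STm σ → STm σ → AFml σ
  | fls : AFml σ
  | conj : AFml σ → AFml σ → AFml σ
  | disj : AFml σ → AFml σ → AFml σ
  | impl : AFml σ → AFml σ → AFml σ
  | snot : AFml σ → AFml σ
  | gall : (PTerm → AFml σ) → AFml σ
  | gex : (PTerm → AFml σ) → AFml σ
  | tall : (List PTerm → AFml σ) → AFml σ
  | tex : (List PTerm → AFml σ) → AFml σ
  | sall : (Set (List PTerm) → AFml σ) → AFml σ
  | sex : (Set (List PTerm) → AFml σ) → AFml σ

/-- `¬F` abbreviates `F → ⊥`. -/
def AFml.neg {σ : ASig} (F : AFml σ) : AFml σ := .impl F .fls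

/-- Classical satisfaction (`⌐` is classical negation). -/
def satA {σ : ASig} (I : AInterp σ) : AFml σ → Prop
  | .patom p args => I.pr p (fun i => (args i).eval I)
  | .cmp c l r => c.holds (l.eval I) (r.eval I)
  | .mem t s => t.eval I ∈ s.eval I
  | .teq l r => l.eval I = r.eval I
  | .seq l r => l.eval I = r.eval I
  | .fls => False
  | .conj F G => satA I F ∧ satA I G
  | .disj F G => satA I F ∨ satA I G
  | .impl F G => satA I F → satA I G
  | .snot F => ¬ satA I F
  | .gall F => ∀ d : PTerm, satA I (F d)
  | .gex F => ∃ d : PTerm, satA I (F d)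
  | .tall F => ∀ d ∈ tupDom σ, satA I (F d)
  | .tex F => ∃ d ∈ tupDom σ, satA I (F d)
  | .sall F => ∀ d ∈ I.setDom, satA I (F d)
  | .sex F => ∃ d ∈ I.setDom, satA I (F d)

/-- ht-satisfaction `⟨H,I⟩ ⊨ht F`. -/
def htA {σ : ASig} (H I : AInterp σ) : AFml σ → Prop
  | .patom p args => satA I (.patom p args) ∧ satA H (.patom p args)
  | .cmp c l r => satA I (.cmp c l r) ∧ satA H (.cmp c l r)
  | .mem t s => satA I (.mem t s) ∧ satA H (.mem t s)
  | .teq l r => (l.eval I = r.eval I) ∧ (l.eval H = r.eval H)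
  | .seq l r => (l.eval I = r.eval I) ∧ (l.eval H = r.eval H)
  | .fls => False
  | .conj F G => htA H I F ∧ htA H I G
  | .disj F G => htA H I F ∨ htA H I G
  | .impl F G => (satA I F → satA I G) ∧ (¬ htA H I F ∨ htA H I G)
  | .snot F => ¬ satA I F ∧ ¬ satA H F
  | .gall F => ∀ d : PTerm, htA H I (F d)
  | .gex F => ∃ d : PTerm, htA H I (F d)
  | .tall F => ∀ d ∈ tupDom σ, htA H I (F d)
  | .tex F => ∃ d ∈ tupDom σ, htA H I (F d)
  | .sall F => ∀ d ∈ I.setDom, htA H I (F d)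
  | .sex F => ∃ d ∈ I.setDom, htA H I (F d)

/-- `H ⪯^{IP,IFn} I`: same universes, `p^H ⊆ p^I` for intensional predicates,
`p^H = p^I` for the other predicates, and `f^H = f^I` for non-intensional
(set-valued) function symbols.  (All remaining symbols are fixed.) -/
def preceqA {σ : ASig} (IP : Set σ.PSym) (IFn : Set σ.SSym) (H I : AInterp σ) : Prop :=
  H.setDom = I.setDom ∧
  (∀ p ∈ IP, ∀ a, H.pr p a → I.pr p a) ∧
  (∀ p ∉ IP, ∀ a, H.pr p a ↔ I.pr p a) ∧
  (∀ f ∉ IFn, ∀ a, H.sfn f a = I.sfn f a)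

def satTh {σ : ASig} (I : AInterp σ) (Γ : Set (AFml σ)) : Prop := ∀ F ∈ Γ, satA I F

def htSatTh {σ : ASig} (H I : AInterp σ) (Γ : Set (AFml σ)) : Prop := ∀ F ∈ Γ, htA H I F

/-- The two semantics. -/
inductive Sem : Type where
  | cli | dlv
deriving DecidableEq

/-- The signature `σ(𝒫,𝒮)`: predicate symbols from `𝒫` (name/arity pairs), the
set-valued function symbols `s^cli_{E/X}`, `s^dlv_{E/X}` for `E/X ∈ 𝒮`, and the
tuple-forming functions `tuple_{E/X}`. -/
def sigPS (P : Set (ℕ × ℕ)) (S : Set SetSymbol) : ASig where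
  PSym := ↥P
  parity := fun p => p.val.2
  SSym := Sem × ↥S
  sarity := fun f => f.2.val.gvars.length
  TSym := ↥S
  tarity := fun f => f.val.elem.terms.length

/-! ### The translations `τ^cli` and `τ^dlv` -/

open scoped Classical

/-- Instantiating a program term by an assignment of ground terms to variables. -/
def PrgTerm.toP (env : ℕ → PTerm) : PrgTerm → PTerm
  | .ground t => t
  | .var v => env v

/-- Assign the values `a` to the variables in the list `X`, deferring to `base`
on other variables. -/
noncomputable def assign (X : List ℕ) (a : Fin X.length → PTerm) (base : ℕ → PTerm) :
    ℕ → PTerm :=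
  fun v => if h : v ∈ X then a ⟨X.idxOf v, List.idxOf_lt_length_iff.mpr h⟩ else base v

noncomputable def trAtomA (P : Set (ℕ × ℕ)) (S : Set SetSymbol)
    (env : ℕ → PTerm) (a : Atom) : AFml (sigPS P S) :=
  if h : (a.pred, a.args.length) ∈ P then
    .patom ⟨(a.pred, a.args.length), h⟩ (fun i => .name ((a.args.get i).toP env))
  else .fls

noncomputable def trAFA (P : Set (ℕ × ℕ)) (S : Set SetSymbol)
    (env : ℕ → PTerm) : AtomicF → AFml (sigPS P S)
  | .atm a => trAtomA P S env a
  | .cmp l c r => .cmp c (.name (l.toP env)) (.name (r.toP env))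

/-- Translation of `not`: `¬` for the clingo semantics and `⌐` for the dlv
semantics. -/
def applyNots {σ : ASig} (x : Sem) : Nots → AFml σ → AFml σ
  | .zero, F => F
  | .one, F => match x with | .cli => F.neg | .dlv => .snot F
  | .two, F => match x with | .cli => F.neg.neg | .dlv => .snot (.snot F)

noncomputable def trBLitA (P : Set (ℕ × ℕ)) (S : Set SetSymbol) (x : Sem)
    (env : ℕ → PTerm) (l : BLit) : AFml (sigPS P S) :=
  applyNots x l.nots (trAFA P S env l.af)

/-- Translation of an aggregate atom `#op{E} ≺ u` occurring with global variable
list `X`: the comparison `op(s^x_{E/X}(X)) ≺ u`. -/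
noncomputable def trAggAtomA (P : Set (ℕ × ℕ)) (S : Set SetSymbol) (x : Sem)
    (X : List ℕ) (env : ℕ → PTerm) (A : AggAtom) : AFml (sigPS P S) :=
  if h : (⟨A.elem, X⟩ : SetSymbol) ∈ S then
    .cmp A.rel
      ((match A.op with
        | .count => GTm.cnt
        | .sum => GTm.sm)
        (STm.sfn ((x, ⟨⟨A.elem, X⟩, h⟩) : (sigPS P S).SSym)
          (fun i => .name (env (X.get i)))))
      (.name (A.guard.toP env))
  else .fls

noncomputable def trLitA (P : Set (ℕ × ℕ)) (S : Set SetSymbol) (x : Sem)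
    (R : Rule) (env : ℕ → PTerm) : Lit → AFml (sigPS P S)
  | .basic l => trBLitA P S x env l
  | .aggr l => applyNots x l.nots (trAggAtomA P S x (aggX R l.agg.elem) env l.agg)

/-- Conjunction of a list of formulas (`⊤ = ¬⊥` for the empty list). -/
def conjL {σ : ASig} : List (AFml σ) → AFml σ
  | [] => AFml.fls.neg
  | [F] => F
  | F :: G :: rest => .conj F (conjL (G :: rest))

noncomputable def trMatrix (P : Set (ℕ × ℕ)) (S : Set SetSymbol) (x : Sem)
    (R : Rule) (env : ℕ → PTerm) : AFml (sigPS P S) :=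
  .impl (conjL (R.body.map (trLitA P S x R env)))
        (match R.head with | some a => trAtomA P S env a | none => .fls)

/-- Universal closure over a list of (general-sort) variables. -/
noncomputable def closeG {σ : ASig} : List ℕ → ((ℕ → PTerm) → AFml σ) → (ℕ → PTerm) → AFml σ
  | [], k, env => k env
  | v :: vs, k, env => .gall (fun d => closeG vs k (Function.update env v d))

/-- `τ^x R`: the universal closure, over the global variables of `R`, of
`τ^x_Z B₁ ∧ … ∧ τ^x_Z Bₙ → τ^x_Z Head`. -/
noncomputable def trRuleA (P : Set (ℕ × ℕ)) (S : Set SetSymbol) (x : Sem)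
    (R : Rule) : AFml (sigPS P S) :=
  closeG (globalVarsSorted R) (trMatrix P S x R) (fun _ => .inf)

/-- `τ^x Pi`: the theory containing `τ^x R` for each rule `R` of `Pi`. -/
def trProgA (P : Set (ℕ × ℕ)) (S : Set SetSymbol) (x : Sem) (Pi : Program) :
    Set (AFml (sigPS P S)) :=
  { F | ∃ R ∈ Pi, F = trRuleA P S x R }

/-! ### agg-interpretations and agg-ht-interpretations -/

/-- The assignment sending the global variables `X` to `a`, the local variables
`Y` to `y`, and everything else to a fixed ground term. -/
noncomputable def envXY (X : List ℕ) (a : Fin X.length → PTerm)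
    (Y : List ℕ) (y : Fin Y.length → PTerm) : ℕ → PTerm :=
  assign X a (assign Y y (fun _ => .inf))

/-- The set of tuples `⟨(t₁)^{XY}_{xy},…,(t_k)^{XY}_{xy}⟩` (over instantiations `y`
of the local variables of `E`) such that `I` satisfies
`τ^x(l₁)^{XY}_{xy} ∧ … ∧ τ^x(l_m)^{XY}_{xy}`. -/
def aggSetI (P : Set (ℕ × ℕ)) (S : Set SetSymbol) (x : Sem)
    (I : AInterp (sigPS P S)) (ss : SetSymbol) (a : Fin ss.gvars.length → PTerm) :
    Set (List PTerm) :=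
  { t | ∃ y : Fin (localsOf ss.elem ss.gvars).length → PTerm,
      t = ss.elem.terms.map (PrgTerm.toP (envXY ss.gvars a (localsOf ss.elem ss.gvars) y)) ∧
      ∀ l ∈ ss.elem.lits,
        satA I (trBLitA P S x (envXY ss.gvars a (localsOf ss.elem ss.gvars) y) l) }

/-- The set of tuples `⟨(t₁)^{XY}_{xy},…,(t_k)^{XY}_{xy}⟩` such that `⟨H,I⟩`
ht-satisfies `τ^cli(l₁)^{XY}_{xy} ∧ … ∧ τ^cli(l_m)^{XY}_{xy}`. -/
def aggSetHT (P : Set (ℕ × ℕ)) (S : Set SetSymbol)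
    (H I : AInterp (sigPS P S)) (ss : SetSymbol) (a : Fin ss.gvars.length → PTerm) :
    Set (List PTerm) :=
  { t | ∃ y : Fin (localsOf ss.elem ss.gvars).length → PTerm,
      t = ss.elem.terms.map (PrgTerm.toP (envXY ss.gvars a (localsOf ss.elem ss.gvars) y)) ∧
      ∀ l ∈ ss.elem.lits,
        htA H I (trBLitA P S Sem.cli (envXY ss.gvars a (localsOf ss.elem ss.gvars) y) l) }

/-- An agg-interpretation: a standard interpretation interpreting each
`s^x_{E/X}(𝐱)` as prescribed. -/
def IsAggInterp (P : Set (ℕ × ℕ)) (S : Set SetSymbol) (I : AInterp (sigPS P S)) : Prop :=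
  IsStd I ∧
  ∀ (x : Sem) (ss : ↥S) (a : Fin ss.val.gvars.length → PTerm),
    I.sfn ((x, ss) : (sigPS P S).SSym) a = aggSetI P S x I ss.val a

/-- An agg-ht-interpretation `⟨H,I⟩`: a standard ht-interpretation such that `I` is
an agg-interpretation, `s^cli_{E/X}(𝐱)^H` is the set of tuples whose
`τ^cli`-translated literals are ht-satisfied by `⟨H,I⟩`, and `s^dlv_{E/X}(𝐱)^H` is
the set of tuples whose `τ^dlv`-translated literals are satisfied by `H`. -/
def IsAggHT (P : Set (ℕ × ℕ)) (S : Set SetSymbol) (H I : AInterp (sigPS P S)) : Prop :=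
  preceqA Set.univ Set.univ H I ∧ IsStd H ∧ IsAggInterp P S I ∧
  (∀ (ss : ↥S) (a : Fin ss.val.gvars.length → PTerm),
    H.sfn ((Sem.cli, ss) : (sigPS P S).SSym) a = aggSetHT P S H I ss.val a) ∧
  (∀ (ss : ↥S) (a : Fin ss.val.gvars.length → PTerm),
    H.sfn ((Sem.dlv, ss) : (sigPS P S).SSym) a = aggSetI P S Sem.dlv H ss.val a)

/-- An agg-stable model of a theory `Γ`: an agg-model `I` of `Γ` such that there is
no agg-ht-interpretation `⟨H,I⟩` with `H ≺ I` satisfying `Γ`. -/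
def IsAggStable (P : Set (ℕ × ℕ)) (S : Set SetSymbol)
    (Γ : Set (AFml (sigPS P S))) (I : AInterp (sigPS P S)) : Prop :=
  IsAggInterp P S I ∧ satTh I Γ ∧
  ¬ ∃ H : AInterp (sigPS P S), IsAggHT P S H I ∧ H ≠ I ∧ htSatTh H I Γ

/-! ### Infinitary propositional formulas and the Abstract Gringo translation -/

/-- Ground atoms of the propositional signature (predicate name together with
argument tuple; comparisons are not among them). -/
abbrev GAtom : Type := ℕ × List PTerm

/-- Infinitary propositional formulas: ground atoms, (set-indexed) infinitary
conjunctions and disjunctions, and implication (`⊥ = ∅^∨`, `¬F = F → ⊥`). -/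
inductive IF : Type 1 where
  | atom : GAtom → IF
  | conj : (ι : Type) → (ι → IF) → IF
  | disj : (ι : Type) → (ι → IF) → IF
  | impl : IF → IF → IF

def IF.top : IF := .conj PEmpty (fun x => x.elim)
def IF.bot : IF := .disj PEmpty (fun x => x.elim)
def IF.neg (F : IF) : IF := .impl F .bot

/-- Satisfaction by a propositional interpretation (a set of ground atoms). -/
def psat (A : Set GAtom) : IF → Prop
  | .atom a => a ∈ A
  | .conj _ f => ∀ i, psat A (f i)
  | .disj _ f => ∃ i, psat A (f i)
  | .impl F G => psat A F → psat A G

noncomputable def trAtomIF (env : ℕ → PTerm) (a : Atom) : IF :=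
  .atom (a.pred, a.args.map (PrgTerm.toP env))

noncomputable def trAFIF (env : ℕ → PTerm) : AtomicF → IF
  | .atm a => trAtomIF env a
  | .cmp l c r => if c.holds (l.toP env) (r.toP env) then .top else .bot

def notsIF : Nots → IF → IF
  | .zero, F => F
  | .one, F => F.neg
  | .two, F => F.neg.neg

noncomputable def trBLitIF (env : ℕ → PTerm) (l : BLit) : IF :=
  notsIF l.nots (trAFIF env l.af)

/-- The conjunction of the (instantiated) literals of an aggregate element. -/
noncomputable def litsConjIF (E : AggElem) (env : ℕ → PTerm) : IF :=
  .conj (Fin E.lits.length) (fun i => trBLitIF env (E.lits.get i))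

/-- The tuple of (instantiated) terms of an aggregate element. -/
noncomputable def tupleOf (E : AggElem) (env : ℕ → PTerm) : List PTerm :=
  E.terms.map (PrgTerm.toP env)

/-- `Δ` justifies the (instantiated) aggregate atom `#op{E} ≺ u`. -/
noncomputable def justifies (op : AggOp) (rel : Cmp) (guard : PTerm)
    (E : AggElem) (Y : List ℕ) (env : ℕ → PTerm)
    (Δ : Set (Fin Y.length → PTerm)) : Prop :=
  rel.holds (op.hat { t | ∃ y ∈ Δ, t = tupleOf E (assign Y y env) }) guard

/-- The Abstract Gringo translation of an instantiated aggregate atom: the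
infinitary conjunction, over all sets `Δ` of instantiations of the local variables
that do not justify the aggregate atom, of the implication from the literals over
`Δ` to the disjunction of the literals over the complement of `Δ`. -/
noncomputable def trAggAtomIF (R : Rule) (env : ℕ → PTerm) (A : AggAtom) : IF :=
  .conj {Δ : Set (Fin (localsOf A.elem (aggX R A.elem)).length → PTerm) //
          ¬ justifies A.op A.rel (A.guard.toP env) A.elem (localsOf A.elem (aggX R A.elem)) env Δ}
    (fun Δ => .impl
      (.conj {y // y ∈ Δ.val}
        (fun y => litsConjIF A.elem (assign (localsOf A.elem (aggX R A.elem)) y.val env)))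
      (.disj {y // y ∉ Δ.val}
        (fun y => litsConjIF A.elem (assign (localsOf A.elem (aggX R A.elem)) y.val env))))

noncomputable def trLitIF (R : Rule) (env : ℕ → PTerm) : Lit → IF
  | .basic l => trBLitIF env l
  | .aggr l => notsIF l.nots (trAggAtomIF R env l.agg)

/-- `τ R`: the infinitary conjunction over all instantiations of the global
variables of `R` of the implications `τB₁ ∧ … ∧ τBₙ → τHead`. -/
noncomputable def trRuleIF (R : Rule) : IF :=
  .conj (Fin (globalVarsSorted R).length → PTerm) (fun z =>
    .impl (.conj (Fin R.body.length)
            (fun i => trLitIF R (assign (globalVarsSorted R) z (fun _ => .inf)) (R.body.get i)))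
          (match R.head with
            | some a => trAtomIF (assign (globalVarsSorted R) z (fun _ => .inf)) a
            | none => .bot))

/-- `τ Pi`. -/
noncomputable def trProgIF (Pi : Program) : IF :=
  .conj ↥Pi (fun R => trRuleIF R.val)

open scoped Classical in
/-- The reduct `F^A`: every maximal subformula not satisfied by `A` is replaced
by `⊥`. -/
noncomputable def reduct (A : Set GAtom) : IF → IF
  | .atom a => if a ∈ A then .atom a else .bot
  | .conj ι f => if psat A (.conj ι f) then .conj ι (fun i => reduct A (f i)) else .bot
  | .disj ι f => if psat A (.disj ι f) then .disj ι (fun i => reduct A (f i)) else .bot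
  | .impl F G => if psat A (.impl F G) then .impl (reduct A F) (reduct A G) else .bot

open scoped Classical in
/-- The FLP-reduct, applied conjunct-wise through conjunctions: an implication is
kept if its antecedent is satisfied by `A` and replaced by `⊤` otherwise. -/
noncomputable def flp (A : Set GAtom) : IF → IF
  | .impl F G => if psat A F then .impl F G else .top
  | .conj ι f => .conj ι (fun i => flp A (f i))
  | .atom a => .atom a
  | .disj ι f => .disj ι f

/-- `A` is a `⊆`-minimal model of `F`. -/
def IsMinModel (A : Set GAtom) (F : IF) : Prop :=
  psat A F ∧ ∀ B : Set GAtom, B ⊂ A → ¬ psat B F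

/-- `A` is a gringo answer set of `Pi`: a `⊆`-minimal model of `(τ Pi)^A`. -/
noncomputable def gringoAS (Pi : Program) (A : Set GAtom) : Prop :=
  IsMinModel A (reduct A (trProgIF Pi))

/-- `A` is a dlv answer set of `Pi`: a `⊆`-minimal model of `FLP(τ Pi, A)`. -/
noncomputable def dlvAS (Pi : Program) (A : Set GAtom) : Prop :=
  IsMinModel A (flp A (trProgIF Pi))

/-- `𝒜_I`: the ground atoms satisfied by `I` whose predicate symbol is not a
comparison. -/
def AIof (P : Set (ℕ × ℕ)) (S : Set SetSymbol) (I : AInterp (sigPS P S)) : Set GAtom :=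
  { a | ∃ h : (a.1, a.2.length) ∈ P,
      I.pr (⟨(a.1, a.2.length), h⟩ : (sigPS P S).PSym) (fun i => a.2.get i) }

/-! ### Auxiliary: propositional layer -/

theorem psat_flp_self (A : Set GAtom) (F : IF) : psat A (flp A F) ↔ psat A F := by
  induction F with
  | atom a => simp [flp, psat]
  | conj ι f ih => simp only [flp, psat]; exact forall_congr' fun i => ih i
  | disj ι f ih => simp [flp, psat]
  | impl F G ihF ihG =>
      show psat A (if psat A F then IF.impl F G else IF.top) ↔ _
      split_ifs with h
      · exact Iff.rfl
      · exact iff_of_true (fun i => i.elim) (fun hF => absurd hF h)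

/-- Satisfaction of a rule. -/
def RuleSat (C : Set GAtom) (R : Rule) : Prop := psat C (trRuleIF R)

/-- Satisfaction of the FLP reduct (w.r.t. `A`) of a rule. -/
def RuleRed (A C : Set GAtom) (R : Rule) : Prop := psat C (flp A (trRuleIF R))

noncomputable def envZ (R : Rule) (z : Fin (globalVarsSorted R).length → PTerm) : ℕ → PTerm :=
  assign (globalVarsSorted R) z (fun _ => .inf)

noncomputable def bodyIF (R : Rule) (z : Fin (globalVarsSorted R).length → PTerm) : IF :=
  .conj (Fin R.body.length) (fun i => trLitIF R (envZ R z) (R.body.get i))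

noncomputable def headIF (R : Rule) (z : Fin (globalVarsSorted R).length → PTerm) : IF :=
  match R.head with
  | some a => trAtomIF (envZ R z) a
  | none => IF.bot

theorem trRuleIF_eq (R : Rule) :
    trRuleIF R = .conj _ (fun z => .impl (bodyIF R z) (headIF R z)) := by
  rfl

theorem ruleSat_iff (C : Set GAtom) (R : Rule) :
    RuleSat C R ↔ ∀ z, psat C (bodyIF R z) → psat C (headIF R z) := by
  rw [RuleSat, trRuleIF_eq]; rfl

theorem ruleRed_iff (A C : Set GAtom) (R : Rule) :
    RuleRed A C R ↔ ∀ z, psat A (bodyIF R z) → psat C (bodyIF R z) → psat C (headIF R z) := by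
  rw [RuleRed, trRuleIF_eq]
  show psat C (.conj _ fun z => flp A (.impl (bodyIF R z) (headIF R z))) ↔ _
  refine forall_congr' fun z => ?_
  show psat C (if psat A (bodyIF R z) then (bodyIF R z).impl (headIF R z) else IF.top) ↔ _
  split_ifs with h
  · exact ⟨fun g _ => g, fun g => g h⟩
  · exact iff_of_true (fun i => i.elim) (fun hA => absurd hA h)

theorem ruleRed_self (A : Set GAtom) (R : Rule) : RuleRed A A R ↔ RuleSat A R :=
  psat_flp_self A (trRuleIF R)

theorem psat_trProgIF (C : Set GAtom) (Pi : Program) :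
    psat C (trProgIF Pi) ↔ ∀ R ∈ Pi, RuleSat C R := by
  constructor
  · intro h R hR; exact h ⟨R, hR⟩
  · intro h R; exact h R.1 R.2

theorem psat_flp_trProgIF (A C : Set GAtom) (Pi : Program) :
    psat C (flp A (trProgIF Pi)) ↔ ∀ R ∈ Pi, RuleRed A C R := by
  constructor
  · intro h R hR; exact h ⟨R, hR⟩
  · intro h R; exact h R.1 R.2

theorem dlvAS_iff (Pi : Program) (A : Set GAtom) :
    dlvAS Pi A ↔ ((∀ R ∈ Pi, RuleSat A R) ∧
      ∀ B : Set GAtom, B ⊂ A → ¬ ∀ R ∈ Pi, RuleRed A B R) := by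
  unfold dlvAS IsMinModel
  rw [psat_flp_trProgIF]
  constructor
  · rintro ⟨h1, h2⟩
    exact ⟨fun R hR => (ruleRed_self A R).mp (h1 R hR),
      fun B hB hall => h2 B hB ((psat_flp_trProgIF A B Pi).mpr hall)⟩
  · rintro ⟨h1, h2⟩
    exact ⟨fun R hR => (ruleRed_self A R).mpr (h1 R hR),
      fun B hB hB2 => h2 B hB ((psat_flp_trProgIF A B Pi).mp hB2)⟩

/-- The pair condition. -/
def Pair (Pi : Program) (A B : Set GAtom) : Prop :=
  (∀ R ∈ Pi, RuleSat A R) ∧ (∀ R ∈ Pi, RuleRed A B R)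
/-! ### Fact and link rules -/

def factRule (a : GAtom) : Rule := ⟨some ⟨a.1, a.2.map .ground⟩, []⟩

def linkRule (p q : GAtom) : Rule :=
  ⟨some ⟨p.1, p.2.map .ground⟩, [.basic ⟨.zero, .atm ⟨q.1, q.2.map .ground⟩⟩]⟩

theorem map_toP_ground (env : ℕ → PTerm) (l : List PTerm) :
    (l.map PrgTerm.ground).map (PrgTerm.toP env) = l := by
  induction l with
  | nil => rfl
  | cons t ts ih => simp [ih, PrgTerm.toP]

theorem groundAtom_varsL (p : ℕ) (l : List PTerm) :
    (Atom.mk p (l.map .ground)).varsL = [] := by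
  show ((l.map PrgTerm.ground).foldr (fun t acc => t.varsL ++ acc) []) = []
  induction l with
  | nil => rfl
  | cons t ts ih => simpa [PrgTerm.varsL] using ih

theorem sortedL_nil : sortedL [] = [] := rfl

theorem gvs_factRule (a : GAtom) : globalVarsSorted (factRule a) = [] := rfl

theorem gvs_linkRule (p q : GAtom) : globalVarsSorted (linkRule p q) = [] := by
  show sortedL ((Atom.mk q.1 (q.2.map .ground)).varsL ++ []) = []
  rw [groundAtom_varsL]
  rfl

theorem psat_trAtomIF_ground (C : Set GAtom) (env : ℕ → PTerm) (a : GAtom) :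
    psat C (trAtomIF env ⟨a.1, a.2.map .ground⟩) ↔ a ∈ C := by
  show (a.1, (a.2.map PrgTerm.ground).map (PrgTerm.toP env)) ∈ C ↔ a ∈ C
  rw [map_toP_ground]

theorem headIF_factRule (a : GAtom) (z) :
    headIF (factRule a) z = trAtomIF (envZ (factRule a) z) ⟨a.1, a.2.map .ground⟩ := rfl

theorem headIF_linkRule (p q : GAtom) (z) :
    headIF (linkRule p q) z = trAtomIF (envZ (linkRule p q) z) ⟨p.1, p.2.map .ground⟩ := rfl

theorem psat_bodyIF_factRule (C : Set GAtom) (a : GAtom) (z) :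
    psat C (bodyIF (factRule a) z) := fun i => i.elim0

theorem ruleSat_factRule (C : Set GAtom) (a : GAtom) :
    RuleSat C (factRule a) ↔ a ∈ C := by
  rw [ruleSat_iff]
  constructor
  · intro h
    have := h (fun _ => PTerm.inf) (psat_bodyIF_factRule C a _)
    rwa [headIF_factRule, psat_trAtomIF_ground] at this
  · intro h z _
    rw [headIF_factRule]
    exact (psat_trAtomIF_ground C _ a).mpr h

theorem ruleRed_factRule (A C : Set GAtom) (a : GAtom) :
    RuleRed A C (factRule a) ↔ a ∈ C := by
  rw [ruleRed_iff]
  constructor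
  · intro h
    have := h (fun _ => PTerm.inf) (psat_bodyIF_factRule A a _) (psat_bodyIF_factRule C a _)
    rwa [headIF_factRule, psat_trAtomIF_ground] at this
  · intro h z _ _
    rw [headIF_factRule]
    exact (psat_trAtomIF_ground C _ a).mpr h

theorem psat_bodyIF_linkRule (C : Set GAtom) (p q : GAtom) (z) :
    psat C (bodyIF (linkRule p q) z) ↔ q ∈ C := by
  show (∀ i : Fin 1, psat C (trLitIF (linkRule p q) _ ((linkRule p q).body.get i))) ↔ _
  constructor
  · intro h
    have := h ⟨0, Nat.one_pos⟩
    exact (psat_trAtomIF_ground C _ q).mp this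
  · intro h i
    rcases i with ⟨iv, hlt⟩
    have hiv : iv = 0 := Nat.lt_one_iff.mp hlt
    subst hiv
    exact (psat_trAtomIF_ground C _ q).mpr h

theorem ruleSat_linkRule (C : Set GAtom) (p q : GAtom) :
    RuleSat C (linkRule p q) ↔ (q ∈ C → p ∈ C) := by
  rw [ruleSat_iff]
  constructor
  · intro h hq
    have := h (fun _ => PTerm.inf) ((psat_bodyIF_linkRule C p q _).mpr hq)
    rwa [headIF_linkRule, psat_trAtomIF_ground] at this
  · intro h z hb
    rw [headIF_linkRule]
    exact (psat_trAtomIF_ground C _ p).mpr (h ((psat_bodyIF_linkRule C p q z).mp hb))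

theorem ruleRed_linkRule (A C : Set GAtom) (p q : GAtom) :
    RuleRed A C (linkRule p q) ↔ (q ∈ A → q ∈ C → p ∈ C) := by
  rw [ruleRed_iff]
  constructor
  · intro h hqA hqC
    have := h (fun _ => PTerm.inf) ((psat_bodyIF_linkRule A p q _).mpr hqA)
      ((psat_bodyIF_linkRule C p q _).mpr hqC)
    rwa [headIF_linkRule, psat_trAtomIF_ground] at this
  · intro h z hA hC
    rw [headIF_linkRule]
    exact (psat_trAtomIF_ground C _ p).mpr
      (h ((psat_bodyIF_linkRule A p q z).mp hA) ((psat_bodyIF_linkRule C p q z).mp hC))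

/-! ### The propositional strong equivalence theorem -/

theorem dlvAS_union_iff (Pi Δ : Program) (A : Set GAtom) :
    dlvAS (Pi ∪ Δ) A ↔
      ((∀ R ∈ Pi, RuleSat A R) ∧ (∀ R ∈ Δ, RuleSat A R) ∧
        ∀ B : Set GAtom, B ⊂ A →
          ¬ ((∀ R ∈ Pi, RuleRed A B R) ∧ (∀ R ∈ Δ, RuleRed A B R))) := by
  rw [dlvAS_iff]
  constructor
  · rintro ⟨h1, h2⟩
    refine ⟨fun R hR => h1 R (Or.inl hR), fun R hR => h1 R (Or.inr hR), ?_⟩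
    rintro B hB ⟨hr1, hr2⟩
    exact h2 B hB (fun R hR => hR.elim (hr1 R) (hr2 R))
  · rintro ⟨h1, h2, h3⟩
    refine ⟨fun R hR => hR.elim (h1 R) (h2 R), ?_⟩
    intro B hB hall
    exact h3 B hB ⟨fun R hR => hall R (Or.inl hR), fun R hR => hall R (Or.inr hR)⟩

theorem pair_self (Pi : Program) (A : Set GAtom) :
    Pair Pi A A ↔ ∀ R ∈ Pi, RuleSat A R := by
  unfold Pair
  constructor
  · exact fun h => h.1
  · exact fun h => ⟨h, fun R hR => (ruleRed_self A R).mpr (h R hR)⟩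

theorem construct_delta (Pi1 Pi2 : Program) (A B : Set GAtom) (hBA : B ⊆ A)
    (h1 : Pair Pi1 A B) (h2 : ¬ Pair Pi2 A B) :
    ∃ (Δ : Program) (A' : Set GAtom), ¬ (dlvAS (Pi1 ∪ Δ) A' ↔ dlvAS (Pi2 ∪ Δ) A') := by
  by_cases hS2 : ∀ R ∈ Pi2, RuleSat A R
  · -- case (b): Pi2 is satisfied by A, so the reduct condition fails for Pi2;
    -- then A is a dlv answer set of Pi2 ∪ Δ but not of Pi1 ∪ Δ
    have hRed2 : ¬ ∀ R ∈ Pi2, RuleRed A B R := fun h => h2 ⟨hS2, h⟩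
    have hBne : B ≠ A := by
      rintro rfl
      exact hRed2 (fun R hR => (ruleRed_self B R).mpr (hS2 R hR))
    have hBssA : B ⊂ A := hBA.ssubset_of_ne hBne
    set Δ : Program := factRule '' B ∪ (Set.image2 linkRule (A \ B) (A \ B)) with hΔ
    have hsatΔ : ∀ R ∈ Δ, RuleSat A R := by
      rintro R (⟨b, hb, rfl⟩ | ⟨p, hp, q, hq, rfl⟩)
      · exact (ruleSat_factRule A b).mpr (hBA hb)
      · exact (ruleSat_linkRule A p q).mpr (fun _ => hp.1)
    refine ⟨Δ, A, ?_⟩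
    intro hiff
    have h2AS : dlvAS (Pi2 ∪ Δ) A := by
      rw [dlvAS_union_iff]
      refine ⟨hS2, hsatΔ, ?_⟩
      rintro C hC ⟨hrPi2, hrΔ⟩
      have hBC : B ⊆ C := by
        intro b hb
        exact (ruleRed_factRule A C b).mp (hrΔ _ (Or.inl ⟨b, hb, rfl⟩))
      have hCne : C ≠ B := by
        rintro rfl
        exact hRed2 hrPi2
      obtain ⟨x, hxC, hxB⟩ : ∃ x ∈ C, x ∉ B := by
        by_contra hcon
        push_neg at hcon
        exact hCne (le_antisymm hcon hBC)
      have hxAB : x ∈ A \ B := ⟨hC.subset hxC, hxB⟩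
      have hACsub : A ⊆ C := by
        intro p hp
        by_cases hpB : p ∈ B
        · exact hBC hpB
        · exact (ruleRed_linkRule A C p x).mp
            (hrΔ _ (Or.inr ⟨p, ⟨hp, hpB⟩, x, hxAB, rfl⟩)) hxAB.1 hxC
      exact absurd (le_antisymm hC.subset hACsub) hC.ne
    have h1AS : dlvAS (Pi1 ∪ Δ) A := hiff.mpr h2AS
    rw [dlvAS_union_iff] at h1AS
    refine h1AS.2.2 B hBssA ⟨h1.2, ?_⟩
    rintro R (⟨b, hb, rfl⟩ | ⟨p, hp, q, hq, rfl⟩)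
    · exact (ruleRed_factRule A B b).mpr hb
    · exact (ruleRed_linkRule A B p q).mpr (fun _ hqB => absurd hqB hq.2)
  · -- case (a): Pi2 is not satisfied by A
    refine ⟨factRule '' A, A, ?_⟩
    intro hiff
    have h1AS : dlvAS (Pi1 ∪ factRule '' A) A := by
      rw [dlvAS_union_iff]
      refine ⟨h1.1, ?_, ?_⟩
      · rintro R ⟨a, ha, rfl⟩
        exact (ruleSat_factRule A a).mpr ha
      · rintro B' hB' ⟨_, hfacts⟩
        have hsub : A ⊆ B' := by
          intro a ha
          exact (ruleRed_factRule A B' a).mp (hfacts _ ⟨a, ha, rfl⟩)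
        exact absurd (le_antisymm hB'.subset hsub) hB'.ne
    have h2AS := hiff.mp h1AS
    rw [dlvAS_union_iff] at h2AS
    exact hS2 h2AS.1

/-- The propositional strong-equivalence theorem. -/
theorem prop_SE (Pi1 Pi2 : Program) :
    (∀ (Δ : Program) (A : Set GAtom), dlvAS (Pi1 ∪ Δ) A ↔ dlvAS (Pi2 ∪ Δ) A) ↔
      (∀ A B : Set GAtom, B ⊆ A → (Pair Pi1 A B ↔ Pair Pi2 A B)) := by
  constructor
  · intro hLHS A B hBA
    by_contra hne
    rcases Classical.em (Pair Pi1 A B) with h1 | h1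
    · have h2 : ¬ Pair Pi2 A B := fun h2 => hne ⟨fun _ => h2, fun _ => h1⟩
      obtain ⟨Δ, A', hcon⟩ := construct_delta Pi1 Pi2 A B hBA h1 h2
      exact hcon (hLHS Δ A')
    · have h2 : Pair Pi2 A B := by
        by_contra h2
        exact hne ⟨fun h => absurd h h1, fun h => absurd h h2⟩
      obtain ⟨Δ, A', hcon⟩ := construct_delta Pi2 Pi1 A B hBA h2 h1
      exact hcon (Iff.comm.mp (hLHS Δ A'))
  · intro hPC Δ A
    have key : ∀ (Q1 Q2 : Program),
        (∀ A' B' : Set GAtom, B' ⊆ A' → (Pair Q1 A' B' ↔ Pair Q2 A' B')) →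
        dlvAS (Q1 ∪ Δ) A → dlvAS (Q2 ∪ Δ) A := by
      intro Q1 Q2 hpc h
      rw [dlvAS_union_iff] at h ⊢
      obtain ⟨hs1, hsΔ, hmin⟩ := h
      have hp11 : Pair Q1 A A := (pair_self Q1 A).mpr hs1
      have hp22 : Pair Q2 A A := (hpc A A le_rfl).mp hp11
      refine ⟨hp22.1, hsΔ, ?_⟩
      rintro C hC ⟨hr2, hrΔ⟩
      have hp2 : Pair Q2 A C := ⟨hp22.1, hr2⟩
      have hp1 : Pair Q1 A C := (hpc A C hC.subset).mpr hp2
      exact hmin C hC ⟨hp1.2, hrΔ⟩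
    constructor
    · exact key Pi1 Pi2 hPC
    · exact key Pi2 Pi1 (fun A' B' h => (hPC A' B' h).symm)
/-! ### Implication-free formulas: ht collapses to pairs of classical satisfaction -/

inductive NoImp {σ : ASig} : AFml σ → Prop where
  | patom (p) (args) : NoImp (.patom p args)
  | cmp (c) (l r) : NoImp (.cmp c l r)
  | fls : NoImp .fls
  | top : NoImp (AFml.fls.neg)
  | conj {F G} : NoImp F → NoImp G → NoImp (.conj F G)
  | snot {F} : NoImp F → NoImp (.snot F)

theorem htA_noimp {σ : ASig} (H I : AInterp σ) {F : AFml σ} (h : NoImp F) :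
    htA H I F ↔ satA I F ∧ satA H F := by
  induction h with
  | patom p args => exact Iff.rfl
  | cmp c l r => exact Iff.rfl
  | fls => simp [htA, satA]
  | top =>
      show ((satA I .fls → satA I .fls) ∧ (¬ htA H I .fls ∨ htA H I .fls)) ↔ _
      simp [htA, satA, AFml.neg]
  | conj h1 h2 ih1 ih2 =>
      show htA H I _ ∧ htA H I _ ↔ _
      rw [ih1, ih2]
      show _ ↔ (satA I _ ∧ satA I _) ∧ (satA H _ ∧ satA H _)
      tauto
  | snot h ih =>
      show (¬ satA I _ ∧ ¬ satA H _) ↔ _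
      exact Iff.rfl

/-! ### conjL -/

theorem noImp_conjL {σ : ASig} (L : List (AFml σ)) (h : ∀ F ∈ L, NoImp F) :
    NoImp (conjL L) := by
  induction L with
  | nil => exact NoImp.top
  | cons F rest ih =>
      cases rest with
      | nil => exact h F (by simp)
      | cons G rest' =>
          exact NoImp.conj (h F (by simp)) (ih (fun F' hF' => h F' (List.mem_cons_of_mem F hF')))

theorem satA_conjL {σ : ASig} (I : AInterp σ) (L : List (AFml σ)) :
    satA I (conjL L) ↔ ∀ F ∈ L, satA I F := by
  induction L with
  | nil => simp [conjL, AFml.neg, satA]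
  | cons F rest ih =>
      cases rest with
      | nil => simp [conjL]
      | cons G rest' =>
          show satA I F ∧ satA I (conjL (G :: rest')) ↔ _
          rw [ih]
          simp
/-! ### assign and closeG -/

theorem assign_nil (z : Fin ([] : List ℕ).length → PTerm) (env : ℕ → PTerm) :
    assign [] z env = env := by
  funext v
  simp [assign]

theorem assign_of_mem {X : List ℕ} (z : Fin X.length → PTerm) (env : ℕ → PTerm)
    {v : ℕ} (h : v ∈ X) :
    assign X z env v = z ⟨X.idxOf v, List.idxOf_lt_length_iff.mpr h⟩ := by
  simp [assign, h]

theorem assign_of_not_mem {X : List ℕ} (z : Fin X.length → PTerm) (env : ℕ → PTerm)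
    {v : ℕ} (h : v ∉ X) :
    assign X z env v = env v := by
  simp [assign, h]

theorem assign_cons {v : ℕ} {vs : List ℕ} (hv : v ∉ vs) (d : PTerm)
    (z : Fin vs.length → PTerm) (env : ℕ → PTerm) :
    assign vs z (Function.update env v d) = assign (v :: vs) (Fin.cons d z) env := by
  funext w
  by_cases hw : w ∈ vs
  · have hwv : w ≠ v := fun h => hv (h ▸ hw)
    rw [assign_of_mem z _ hw, assign_of_mem _ env (List.mem_cons_of_mem v hw)]
    have hidx : (v :: vs).idxOf w = vs.idxOf w + 1 := by
      exact List.idxOf_cons_ne vs (Ne.symm hwv)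
    simp only [hidx]
    rfl
  · by_cases hwv : w = v
    · subst hwv
      rw [assign_of_not_mem z _ hv, Function.update_self,
        assign_of_mem _ env (List.mem_cons_self (a := w) (l := vs))]
      have hidx : (w :: vs).idxOf w = 0 := by simp
      simp only [hidx]
      rfl
    · have hnw : w ∉ v :: vs := by
        simp [hwv, hw]
      rw [assign_of_not_mem z _ hw, assign_of_not_mem _ env hnw,
        Function.update_of_ne hwv]

theorem fin_cons_self {n : ℕ} (z : Fin (n + 1) → PTerm) :
    Fin.cons (z ⟨0, Nat.succ_pos n⟩) (fun i : Fin n => z i.succ) = z := by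
  funext i
  rcases i with ⟨iv, h⟩
  cases iv <;> rfl

theorem satA_closeG {σ : ASig} (I : AInterp σ) (X : List ℕ) (hX : X.Nodup)
    (k : (ℕ → PTerm) → AFml σ) (env : ℕ → PTerm) :
    satA I (closeG X k env) ↔ ∀ z : Fin X.length → PTerm, satA I (k (assign X z env)) := by
  induction X generalizing env with
  | nil =>
      constructor
      · intro h z
        rw [assign_nil]
        exact h
      · intro h
        have := h (fun i => i.elim0)
        rwa [assign_nil] at this
  | cons v vs ih =>
      have hvvs : v ∉ vs := (List.nodup_cons.mp hX).1
      have hvs : vs.Nodup := (List.nodup_cons.mp hX).2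
      show (∀ d : PTerm, satA I (closeG vs k (Function.update env v d))) ↔ _
      constructor
      · intro h z
        have := (ih hvs (Function.update env v (z ⟨0, Nat.succ_pos _⟩))).mp
          (h (z ⟨0, Nat.succ_pos _⟩)) (fun i => z i.succ)
        rwa [assign_cons hvvs, fin_cons_self (n := vs.length) z] at this
      · intro h d
        rw [ih hvs]
        intro z'
        rw [assign_cons hvvs]
        exact h (Fin.cons d z')

theorem htA_closeG {σ : ASig} (H I : AInterp σ) (X : List ℕ) (hX : X.Nodup)
    (k : (ℕ → PTerm) → AFml σ) (env : ℕ → PTerm) :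
    htA H I (closeG X k env) ↔ ∀ z : Fin X.length → PTerm, htA H I (k (assign X z env)) := by
  induction X generalizing env with
  | nil =>
      constructor
      · intro h z
        rw [assign_nil]
        exact h
      · intro h
        have := h (fun i => i.elim0)
        rwa [assign_nil] at this
  | cons v vs ih =>
      have hvvs : v ∉ vs := (List.nodup_cons.mp hX).1
      have hvs : vs.Nodup := (List.nodup_cons.mp hX).2
      show (∀ d : PTerm, htA H I (closeG vs k (Function.update env v d))) ↔ _
      constructor
      · intro h z
        have := (ih hvs (Function.update env v (z ⟨0, Nat.succ_pos _⟩))).mp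
          (h (z ⟨0, Nat.succ_pos _⟩)) (fun i => z i.succ)
        rwa [assign_cons hvvs, fin_cons_self (n := vs.length) z] at this
      · intro h d
        rw [ih hvs]
        intro z'
        rw [assign_cons hvvs]
        exact h (Fin.cons d z')

theorem sortedL_nodup (l : List ℕ) : (sortedL l).Nodup :=
  ((List.perm_insertionSort (· ≤ ·) l.dedup).nodup_iff).mpr l.nodup_dedup

theorem mem_sortedL {l : List ℕ} {a : ℕ} : a ∈ sortedL l ↔ a ∈ l := by
  unfold sortedL
  rw [(List.perm_insertionSort (· ≤ ·) l.dedup).mem_iff]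
  exact List.mem_dedup

theorem globalVarsSorted_nodup (R : Rule) : (globalVarsSorted R).Nodup :=
  sortedL_nodup _
/-! ### Membership in foldr-append lists -/

theorem mem_foldr_append {α β : Type _} (f : β → List α) (l : List β) (a : α) :
    a ∈ l.foldr (fun x acc => f x ++ acc) [] ↔ ∃ x ∈ l, a ∈ f x := by
  induction l with
  | nil => simp
  | cons x xs ih => simp [ih]

theorem mem_atomsL_head {R : Rule} {a : Atom} (h : R.head = some a) : a ∈ R.atomsL := by
  unfold Rule.atomsL
  rw [h]
  exact List.mem_append_left _ (by simp)

theorem mem_atomsL_basic {R : Rule} {b : BLit} (hb : Lit.basic b ∈ R.body)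
    {a : Atom} (ha : a ∈ b.af.atomL) : a ∈ R.atomsL := by
  unfold Rule.atomsL
  refine List.mem_append_right _ ?_
  rw [mem_foldr_append (fun l => match l with
      | .basic b => b.af.atomL
      | .aggr al => al.agg.elem.lits.foldr (fun b acc2 => b.af.atomL ++ acc2) []) R.body a]
  exact ⟨Lit.basic b, hb, ha⟩

theorem mem_atomsL_aggr {R : Rule} {al : AggLit} (hl : Lit.aggr al ∈ R.body)
    {bl : BLit} (hbl : bl ∈ al.agg.elem.lits) {a : Atom} (ha : a ∈ bl.af.atomL) :
    a ∈ R.atomsL := by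
  unfold Rule.atomsL
  refine List.mem_append_right _ ?_
  rw [mem_foldr_append (fun l => match l with
      | .basic b => b.af.atomL
      | .aggr al => al.agg.elem.lits.foldr (fun b acc2 => b.af.atomL ++ acc2) []) R.body a]
  refine ⟨Lit.aggr al, hl, ?_⟩
  show a ∈ al.agg.elem.lits.foldr (fun b acc2 => b.af.atomL ++ acc2) []
  rw [mem_foldr_append (fun b : BLit => b.af.atomL) al.agg.elem.lits a]
  exact ⟨bl, hbl, ha⟩

/-- All predicate and set symbols of a rule are available. -/
def RuleOK (P : Set (ℕ × ℕ)) (S : Set SetSymbol) (R : Rule) : Prop :=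
  (∀ a ∈ R.atomsL, (a.pred, a.args.length) ∈ P) ∧
  (∀ l : AggLit, Lit.aggr l ∈ R.body → (⟨l.agg.elem, aggX R l.agg.elem⟩ : SetSymbol) ∈ S)

theorem ruleOK_of_mem {Pi1 Pi2 : Program} {P : Set (ℕ × ℕ)} {S : Set SetSymbol}
    (hP : predsOf (Pi1 ∪ Pi2) ⊆ P) (hS : ssymsOf (Pi1 ∪ Pi2) ⊆ S)
    {R : Rule} (hR : R ∈ Pi1 ∪ Pi2) : RuleOK P S R := by
  constructor
  · intro a ha
    exact hP ⟨R, hR, a, ha, rfl⟩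
  · intro l hl
    exact hS ⟨R, hR, l, hl, rfl⟩

/-! ### Variable subsets -/

theorem varsL_subset_elem_terms {E : AggElem} {t : PrgTerm} (ht : t ∈ E.terms) :
    ∀ v ∈ t.varsL, v ∈ E.varsL := by
  intro v hv
  unfold AggElem.varsL
  refine List.mem_append_left _ ?_
  rw [mem_foldr_append (fun t : PrgTerm => t.varsL) E.terms v]
  exact ⟨t, ht, hv⟩

theorem varsL_subset_elem_lits {E : AggElem} {l : BLit} (hl : l ∈ E.lits) :
    ∀ v ∈ l.varsL, v ∈ E.varsL := by
  intro v hv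
  unfold AggElem.varsL
  refine List.mem_append_right _ ?_
  rw [mem_foldr_append (fun l : BLit => l.varsL) E.lits v]
  exact ⟨l, hl, hv⟩

theorem varsL_subset_atom {a : Atom} {t : PrgTerm} (ht : t ∈ a.args) :
    ∀ v ∈ t.varsL, v ∈ a.varsL := by
  intro v hv
  unfold Atom.varsL
  rw [mem_foldr_append (fun t : PrgTerm => t.varsL) a.args v]
  exact ⟨t, ht, hv⟩

/-! ### Environment congruence -/

theorem toP_congr {e1 e2 : ℕ → PTerm} {t : PrgTerm}
    (h : ∀ v ∈ t.varsL, e1 v = e2 v) : t.toP e1 = t.toP e2 := by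
  cases t with
  | ground g => rfl
  | var v => exact h v (by simp [PrgTerm.varsL])

theorem trAtomA_congr (P : Set (ℕ × ℕ)) (S : Set SetSymbol) {e1 e2 : ℕ → PTerm} {a : Atom}
    (h : ∀ v ∈ a.varsL, e1 v = e2 v) : trAtomA P S e1 a = trAtomA P S e2 a := by
  unfold trAtomA
  split
  · congr 1
    funext i
    congr 1
    exact toP_congr (fun v hv => h v (varsL_subset_atom (a.args.get_mem i) v hv))
  · rfl

theorem trAFA_congr (P : Set (ℕ × ℕ)) (S : Set SetSymbol) {e1 e2 : ℕ → PTerm} {af : AtomicF}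
    (h : ∀ v ∈ af.varsL, e1 v = e2 v) : trAFA P S e1 af = trAFA P S e2 af := by
  cases af with
  | atm a => exact trAtomA_congr P S h
  | cmp l c r =>
      show AFml.cmp c (GTm.name (l.toP e1)) (GTm.name (r.toP e1)) =
        AFml.cmp c (GTm.name (l.toP e2)) (GTm.name (r.toP e2))
      rw [toP_congr (fun v hv => h v (by simp [AtomicF.varsL, hv])),
        toP_congr (fun v hv => h v (by simp [AtomicF.varsL, hv]))]

theorem trBLitA_congr (P : Set (ℕ × ℕ)) (S : Set SetSymbol) (x : Sem)
    {e1 e2 : ℕ → PTerm} {l : BLit}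
    (h : ∀ v ∈ l.varsL, e1 v = e2 v) : trBLitA P S x e1 l = trBLitA P S x e2 l := by
  unfold trBLitA
  rw [trAFA_congr P S h]

/-! ### Atom-level and literal-level correspondence -/

theorem map_eq_ofFn {α β : Type _} (l : List α) (f : α → β) :
    List.ofFn (fun i : Fin l.length => f (l.get i)) = l.map f := by
  refine List.ext_get (by simp) ?_
  intro i h1 h2
  simp

section Corr

variable {P : Set (ℕ × ℕ)} {S : Set SetSymbol}
variable (J : AInterp (sigPS P S)) (C : Set GAtom)
variable (hpr : ∀ (p : ↥P) (f : Fin p.val.2 → PTerm), J.pr p f ↔ (p.val.1, List.ofFn f) ∈ C)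

include hpr

theorem trAtom_corr (env : ℕ → PTerm) (a : Atom) (ha : (a.pred, a.args.length) ∈ P) :
    satA J (trAtomA P S env a) ↔ psat C (trAtomIF env a) := by
  unfold trAtomA
  rw [dif_pos ha]
  show J.pr ⟨(a.pred, a.args.length), ha⟩ (fun i => (a.args.get i).toP env) ↔ _
  refine (hpr ⟨(a.pred, a.args.length), ha⟩ (fun i => (a.args.get i).toP env)).trans ?_
  show (a.pred, List.ofFn fun i => (a.args.get i).toP env) ∈ C ↔
    (a.pred, a.args.map (PrgTerm.toP env)) ∈ C
  rw [map_eq_ofFn a.args (PrgTerm.toP env)]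

omit hpr in
theorem psat_bot_iff : psat C IF.bot ↔ False := by
  constructor
  · rintro ⟨i, _⟩
    exact i.elim
  · exact False.elim

theorem trAF_corr (env : ℕ → PTerm) (af : AtomicF)
    (h : ∀ a ∈ af.atomL, (a.pred, a.args.length) ∈ P) :
    satA J (trAFA P S env af) ↔ psat C (trAFIF env af) := by
  cases af with
  | atm a => exact trAtom_corr J C hpr env a (h a (by simp [AtomicF.atomL]))
  | cmp l c r =>
      show Cmp.holds c (l.toP env) (r.toP env) ↔
        psat C (if c.holds (l.toP env) (r.toP env) then IF.top else IF.bot)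
      split_ifs with hc
      · exact iff_of_true hc (fun i => i.elim)
      · exact iff_of_false hc (fun hb => (psat_bot_iff C).mp hb)

omit hpr in
theorem corr_nots (n : Nots) {F : AFml (sigPS P S)} {G : IF}
    (h : satA J F ↔ psat C G) :
    satA J (applyNots Sem.dlv n F) ↔ psat C (notsIF n G) := by
  cases n with
  | zero => exact h
  | one =>
      show ¬ satA J F ↔ psat C (IF.impl G IF.bot)
      constructor
      · intro hn hG
        exact absurd (h.mpr hG) hn
      · intro hn hF
        exact (psat_bot_iff C).mp (hn (h.mp hF))
  | two =>
      show ¬ ¬ satA J F ↔ psat C (IF.impl (IF.impl G IF.bot) IF.bot)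
      constructor
      · intro hnn hng
        exact (hnn (fun hF => (psat_bot_iff C).mp (hng (h.mp hF)))).elim
      · intro hn hnF
        exact (psat_bot_iff C).mp (hn (fun hG => absurd (h.mpr hG) hnF))

theorem trBLit_corr (env : ℕ → PTerm) (l : BLit)
    (h : ∀ a ∈ l.af.atomL, (a.pred, a.args.length) ∈ P) :
    satA J (trBLitA P S Sem.dlv env l) ↔ psat C (trBLitIF env l) :=
  corr_nots J C l.nots (trAF_corr J C hpr env l.af h)

omit hpr in
theorem psat_litsConjIF (E : AggElem) (env : ℕ → PTerm) :
    psat C (litsConjIF E env) ↔ ∀ l ∈ E.lits, psat C (trBLitIF env l) := by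
  show (∀ i : Fin E.lits.length, psat C (trBLitIF env (E.lits.get i))) ↔ _
  constructor
  · intro h l hl
    obtain ⟨i, rfl⟩ := List.mem_iff_get.mp hl
    exact h i
  · intro h i
    exact h _ (E.lits.get_mem i)

end Corr
/-! ### The aggregate correspondence -/

theorem mem_localsOf {E : AggElem} {X : List ℕ} {v : ℕ} :
    v ∈ localsOf E X ↔ v ∈ E.varsL ∧ v ∉ X := by
  unfold localsOf
  rw [mem_sortedL, List.mem_filter]
  simp

theorem envXY_agree (E : AggElem) (X : List ℕ) (env : ℕ → PTerm)
    (y : Fin (localsOf E X).length → PTerm) :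
    ∀ v ∈ E.varsL, envXY X (fun i => env (X.get i)) (localsOf E X) y v =
      assign (localsOf E X) y env v := by
  intro v hv
  by_cases hvX : v ∈ X
  · have hvY : v ∉ localsOf E X := fun h => (mem_localsOf.mp h).2 hvX
    rw [envXY, assign_of_mem _ _ hvX, assign_of_not_mem _ _ hvY]
    congr 1
    simp [List.getElem_idxOf]
  · have hvY : v ∈ localsOf E X := mem_localsOf.mpr ⟨hv, hvX⟩
    rw [envXY, assign_of_not_mem _ _ hvX, assign_of_mem _ _ hvY, assign_of_mem _ _ hvY]

section AggCorr

variable {P : Set (ℕ × ℕ)} {S : Set SetSymbol}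
variable (J : AInterp (sigPS P S)) (C : Set GAtom)
variable (hpr : ∀ (p : ↥P) (f : Fin p.val.2 → PTerm), J.pr p f ↔ (p.val.1, List.ofFn f) ∈ C)

include hpr

theorem aggSetI_eq (ss : SetSymbol)
    (hlits : ∀ bl ∈ ss.elem.lits, ∀ a ∈ bl.af.atomL, (a.pred, a.args.length) ∈ P)
    (env : ℕ → PTerm) :
    aggSetI P S Sem.dlv J ss (fun i => env (ss.gvars.get i)) =
      { t | ∃ y ∈ {y : Fin (localsOf ss.elem ss.gvars).length → PTerm |
              psat C (litsConjIF ss.elem (assign (localsOf ss.elem ss.gvars) y env))},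
            t = tupleOf ss.elem (assign (localsOf ss.elem ss.gvars) y env) } := by
  have key1 : ∀ y : Fin (localsOf ss.elem ss.gvars).length → PTerm,
      ss.elem.terms.map (PrgTerm.toP (envXY ss.gvars (fun i => env (ss.gvars.get i))
        (localsOf ss.elem ss.gvars) y)) =
      tupleOf ss.elem (assign (localsOf ss.elem ss.gvars) y env) := by
    intro y
    unfold tupleOf
    refine List.map_congr_left ?_
    intro t ht
    exact toP_congr (fun v hv =>
      envXY_agree ss.elem ss.gvars env y v (varsL_subset_elem_terms ht v hv))
  have key2 : ∀ (y : Fin (localsOf ss.elem ss.gvars).length → PTerm) (l : BLit),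
      l ∈ ss.elem.lits →
      (satA J (trBLitA P S Sem.dlv (envXY ss.gvars (fun i => env (ss.gvars.get i))
          (localsOf ss.elem ss.gvars) y) l) ↔
        psat C (trBLitIF (assign (localsOf ss.elem ss.gvars) y env) l)) := by
    intro y l hl
    rw [trBLitA_congr P S Sem.dlv (fun v hv =>
      envXY_agree ss.elem ss.gvars env y v (varsL_subset_elem_lits hl v hv))]
    exact trBLit_corr J C hpr _ l (hlits l hl)
  ext t
  constructor
  · rintro ⟨y, rfl, hsat⟩
    refine ⟨y, ?_, key1 y⟩
    · exact (psat_litsConjIF C ss.elem _).mpr (fun l hl => (key2 y l hl).mp (hsat l hl))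
  · rintro ⟨y, hy, rfl⟩
    exact ⟨y, (key1 y).symm, fun l hl => (key2 y l hl).mpr ((psat_litsConjIF C ss.elem _).mp hy l hl)⟩

omit hpr in
theorem psat_trAggAtomIF_iff (R : Rule) (env : ℕ → PTerm) (Ag : AggAtom) :
    psat C (trAggAtomIF R env Ag) ↔
      justifies Ag.op Ag.rel (Ag.guard.toP env) Ag.elem
        (localsOf Ag.elem (aggX R Ag.elem)) env
        {y | psat C (litsConjIF Ag.elem (assign (localsOf Ag.elem (aggX R Ag.elem)) y env))} := by
  set Y := localsOf Ag.elem (aggX R Ag.elem) with hY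
  set ΔC : Set (Fin Y.length → PTerm) :=
    {y | psat C (litsConjIF Ag.elem (assign Y y env))} with hΔC
  constructor
  · intro h
    by_contra hnj
    obtain ⟨y, hy⟩ := h ⟨ΔC, hnj⟩ (fun y => y.2)
    exact y.2 hy
  · rintro hj ⟨Δ, hnj⟩ hant
    have hsub : Δ ⊆ ΔC := fun y hy => hant ⟨y, hy⟩
    have htsub : {t | ∃ y ∈ Δ, t = tupleOf Ag.elem (assign Y y env)} ⊆
        {t | ∃ y ∈ ΔC, t = tupleOf Ag.elem (assign Y y env)} := by
      rintro t ⟨y, hy, rfl⟩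
      exact ⟨y, hsub hy, rfl⟩
    have htne : {t | ∃ y ∈ Δ, t = tupleOf Ag.elem (assign Y y env)} ≠
        {t | ∃ y ∈ ΔC, t = tupleOf Ag.elem (assign Y y env)} := by
      intro heq
      apply hnj
      unfold justifies at hj ⊢
      rw [heq]
      exact hj
    obtain ⟨t, htC, htD⟩ := Set.exists_of_ssubset (ssubset_of_subset_of_ne htsub htne)
    obtain ⟨y, hyC, rfl⟩ := htC
    have hyD : y ∉ Δ := fun hyD => htD ⟨y, hyD, rfl⟩
    exact ⟨⟨y, hyD⟩, hyC⟩

theorem trAggAtom_corr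
    (hsfnJ : ∀ (ss : ↥S) (a : Fin ss.val.gvars.length → PTerm),
      J.sfn ((Sem.dlv, ss) : (sigPS P S).SSym) a = aggSetI P S Sem.dlv J ss.val a)
    (R : Rule) (Ag : AggAtom)
    (hss : (⟨Ag.elem, aggX R Ag.elem⟩ : SetSymbol) ∈ S)
    (hlits : ∀ bl ∈ Ag.elem.lits, ∀ a ∈ bl.af.atomL, (a.pred, a.args.length) ∈ P)
    (env : ℕ → PTerm) :
    satA J (trAggAtomA P S Sem.dlv (aggX R Ag.elem) env Ag) ↔
      psat C (trAggAtomIF R env Ag) := by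
  rw [psat_trAggAtomIF_iff C R env Ag]
  unfold trAggAtomA
  rw [dif_pos hss]
  have heval : ∀ op : AggOp, GTm.eval J ((match op with
      | .count => GTm.cnt
      | .sum => GTm.sm)
      (STm.sfn ((Sem.dlv, ⟨⟨Ag.elem, aggX R Ag.elem⟩, hss⟩) : (sigPS P S).SSym)
        (fun i => .name (env ((aggX R Ag.elem).get i))))) =
      op.hat (J.sfn ((Sem.dlv, ⟨⟨Ag.elem, aggX R Ag.elem⟩, hss⟩) : (sigPS P S).SSym)
        (fun i => env ((aggX R Ag.elem).get i))) := by
    intro op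
    cases op <;> rfl
  show Ag.rel.holds _ (GTm.eval J (.name (Ag.guard.toP env))) ↔ _
  rw [heval Ag.op]
  have hset := (hsfnJ ⟨⟨Ag.elem, aggX R Ag.elem⟩, hss⟩
      (fun i => env ((aggX R Ag.elem).get i))).trans
    (aggSetI_eq J C hpr ⟨Ag.elem, aggX R Ag.elem⟩ hlits env)
  unfold justifies
  exact iff_of_eq (congrArg
    (fun s => Ag.rel.holds (Ag.op.hat s) (PrgTerm.toP env Ag.guard)) hset)

/-! ### Literal-, body-, head- and rule-level correspondence -/

theorem trLit_corr
    (hsfnJ : ∀ (ss : ↥S) (a : Fin ss.val.gvars.length → PTerm),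
      J.sfn ((Sem.dlv, ss) : (sigPS P S).SSym) a = aggSetI P S Sem.dlv J ss.val a)
    (R : Rule) (hOK : RuleOK P S R) (env : ℕ → PTerm) (l : Lit) (hl : l ∈ R.body) :
    satA J (trLitA P S Sem.dlv R env l) ↔ psat C (trLitIF R env l) := by
  cases l with
  | basic b =>
      exact trBLit_corr J C hpr env b (fun a ha => hOK.1 a (mem_atomsL_basic hl ha))
  | aggr al =>
      exact corr_nots J C al.nots (trAggAtom_corr J C hpr hsfnJ R al.agg (hOK.2 al hl)
        (fun bl hbl a ha => hOK.1 a (mem_atomsL_aggr hl hbl ha)) env)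

omit hpr in
theorem noImp_trAtomA (env : ℕ → PTerm) (a : Atom) : NoImp (trAtomA P S env a) := by
  unfold trAtomA
  split
  · exact NoImp.patom _ _
  · exact NoImp.fls

omit hpr in
theorem noImp_trLitA (R : Rule) (env : ℕ → PTerm) (l : Lit) :
    NoImp (trLitA P S Sem.dlv R env l) := by
  have hnots : ∀ (n : Nots) (F : AFml (sigPS P S)), NoImp F →
      NoImp (applyNots Sem.dlv n F) := by
    intro n F h
    cases n with
    | zero => exact h
    | one => exact NoImp.snot h
    | two => exact NoImp.snot (NoImp.snot h)
  cases l with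
  | basic b =>
      refine hnots b.nots _ ?_
      cases hb : b.af with
      | atm a => exact noImp_trAtomA _ a
      | cmp l c r => exact NoImp.cmp _ _ _
  | aggr al =>
      refine hnots al.nots _ ?_
      unfold trAggAtomA
      split
      · exact NoImp.cmp _ _ _
      · exact NoImp.fls

theorem body_corr
    (hsfnJ : ∀ (ss : ↥S) (a : Fin ss.val.gvars.length → PTerm),
      J.sfn ((Sem.dlv, ss) : (sigPS P S).SSym) a = aggSetI P S Sem.dlv J ss.val a)
    (R : Rule) (hOK : RuleOK P S R) (z) :
    satA J (conjL (R.body.map (trLitA P S Sem.dlv R (envZ R z)))) ↔ psat C (bodyIF R z) := by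
  rw [satA_conjL]
  have h1 : (∀ F ∈ R.body.map (trLitA P S Sem.dlv R (envZ R z)), satA J F) ↔
      ∀ l ∈ R.body, satA J (trLitA P S Sem.dlv R (envZ R z) l) := by
    simp
  rw [h1]
  show _ ↔ ∀ i : Fin R.body.length, psat C (trLitIF R (envZ R z) (R.body.get i))
  constructor
  · intro h i
    exact (trLit_corr J C hpr hsfnJ R hOK (envZ R z) _ (R.body.get_mem i)).mp
      (h _ (R.body.get_mem i))
  · intro h l hl
    obtain ⟨i, rfl⟩ := List.mem_iff_get.mp hl
    exact (trLit_corr J C hpr hsfnJ R hOK (envZ R z) _ (R.body.get_mem i)).mpr (h i)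

end AggCorr
/-! ### The rule bridge -/

section Bridge

variable {P : Set (ℕ × ℕ)} {S : Set SetSymbol}

noncomputable def headA (P : Set (ℕ × ℕ)) (S : Set SetSymbol) (R : Rule)
    (env : ℕ → PTerm) : AFml (sigPS P S) :=
  match R.head with | some a => trAtomA P S env a | none => .fls

theorem noImp_headA (R : Rule) (env : ℕ → PTerm) : NoImp (headA P S R env) := by
  unfold headA
  split
  · exact noImp_trAtomA _ _
  · exact NoImp.fls

theorem head_corr (J : AInterp (sigPS P S)) (C : Set GAtom)
    (hpr : ∀ (p : ↥P) (f : Fin p.val.2 → PTerm), J.pr p f ↔ (p.val.1, List.ofFn f) ∈ C)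
    (R : Rule) (hOK : RuleOK P S R) (z) :
    satA J (headA P S R (envZ R z)) ↔ psat C (headIF R z) := by
  unfold headA headIF
  cases hh : R.head with
  | some a => exact trAtom_corr J C hpr (envZ R z) a (hOK.1 a (mem_atomsL_head hh))
  | none =>
      show False ↔ psat C IF.bot
      rw [psat_bot_iff]

theorem trMatrix_eq (R : Rule) (env : ℕ → PTerm) :
    trMatrix P S Sem.dlv R env =
      .impl (conjL (R.body.map (trLitA P S Sem.dlv R env))) (headA P S R env) := rfl

theorem ruleBridge (H I : AInterp (sigPS P S)) (CI CH : Set GAtom)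
    (hprI : ∀ (p : ↥P) (f : Fin p.val.2 → PTerm), I.pr p f ↔ (p.val.1, List.ofFn f) ∈ CI)
    (hprH : ∀ (p : ↥P) (f : Fin p.val.2 → PTerm), H.pr p f ↔ (p.val.1, List.ofFn f) ∈ CH)
    (hsfnI : ∀ (ss : ↥S) (a : Fin ss.val.gvars.length → PTerm),
      I.sfn ((Sem.dlv, ss) : (sigPS P S).SSym) a = aggSetI P S Sem.dlv I ss.val a)
    (hsfnH : ∀ (ss : ↥S) (a : Fin ss.val.gvars.length → PTerm),
      H.sfn ((Sem.dlv, ss) : (sigPS P S).SSym) a = aggSetI P S Sem.dlv H ss.val a)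
    (R : Rule) (hOK : RuleOK P S R) :
    htA H I (trRuleA P S Sem.dlv R) ↔ (RuleSat CI R ∧ RuleRed CI CH R) := by
  unfold trRuleA
  rw [htA_closeG H I _ (globalVarsSorted_nodup R)]
  rw [ruleSat_iff, ruleRed_iff, ← forall_and]
  refine forall_congr' fun z => ?_
  have hmx : trMatrix P S Sem.dlv R (assign (globalVarsSorted R) z (fun _ => .inf)) =
      .impl (conjL (R.body.map (trLitA P S Sem.dlv R (envZ R z)))) (headA P S R (envZ R z)) :=
    rfl
  rw [hmx]
  set B := conjL (R.body.map (trLitA P S Sem.dlv R (envZ R z))) with hB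
  set Hd := headA P S R (envZ R z) with hHd
  have hnB : NoImp B := by
    refine noImp_conjL _ ?_
    intro F hF
    obtain ⟨l, _, rfl⟩ := List.mem_map.mp hF
    exact noImp_trLitA R (envZ R z) l
  have hnH : NoImp Hd := noImp_headA R (envZ R z)
  have hIB : satA I B ↔ psat CI (bodyIF R z) := body_corr I CI hprI hsfnI R hOK z
  have hHB : satA H B ↔ psat CH (bodyIF R z) := body_corr H CH hprH hsfnH R hOK z
  have hIH : satA I Hd ↔ psat CI (headIF R z) := head_corr I CI hprI R hOK z
  have hHH : satA H Hd ↔ psat CH (headIF R z) := head_corr H CH hprH R hOK z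
  show (satA I B → satA I Hd) ∧ (¬ htA H I B ∨ htA H I Hd) ↔ _
  rw [htA_noimp H I hnB, htA_noimp H I hnH, hIB, hHB, hIH, hHH]
  constructor
  · rintro ⟨h1, h2⟩
    refine ⟨h1, fun hA hB' => ?_⟩
    rcases h2 with h2 | h2
    · exact absurd ⟨hA, hB'⟩ h2
    · exact h2.2
  · rintro ⟨h1, h2⟩
    refine ⟨h1, ?_⟩
    by_cases hA : psat CI (bodyIF R z)
    · by_cases hB' : psat CH (bodyIF R z)
      · exact Or.inr ⟨h1 hA, h2 hA hB'⟩
      · exact Or.inl (fun hc => hB' hc.2)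
    · exact Or.inl (fun hc => hA hc.1)

end Bridge
/-! ### Interpretations built from sets of ground atoms -/

section Constr

variable {P : Set (ℕ × ℕ)} {S : Set SetSymbol}

theorem satA_trAFA_pr {J J' : AInterp (sigPS P S)} (hpr : J.pr = J'.pr)
    (env : ℕ → PTerm) (af : AtomicF) :
    satA J (trAFA P S env af) ↔ satA J' (trAFA P S env af) := by
  cases af with
  | atm a =>
      show satA J (trAtomA P S env a) ↔ satA J' (trAtomA P S env a)
      unfold trAtomA
      split
      · show J.pr _ _ ↔ J'.pr _ _
        rw [hpr]
        exact Iff.rfl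
      · exact Iff.rfl
  | cmp l c r => exact Iff.rfl

theorem satA_trBLitA_pr {J J' : AInterp (sigPS P S)} (hpr : J.pr = J'.pr)
    (x : Sem) (env : ℕ → PTerm) (l : BLit) :
    satA J (trBLitA P S x env l) ↔ satA J' (trBLitA P S x env l) := by
  obtain ⟨n, af⟩ := l
  have hb := satA_trAFA_pr hpr env af
  cases n <;> cases x <;>
    simp only [trBLitA, applyNots, AFml.neg, satA] <;> rw [hb]

theorem htA_trAFA_pr {H H' I I' : AInterp (sigPS P S)} (hH : H.pr = H'.pr)
    (hI : I.pr = I'.pr) (env : ℕ → PTerm) (af : AtomicF) :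
    htA H I (trAFA P S env af) ↔ htA H' I' (trAFA P S env af) := by
  cases af with
  | atm a =>
      show htA H I (trAtomA P S env a) ↔ htA H' I' (trAtomA P S env a)
      unfold trAtomA
      split
      · show (I.pr _ _ ∧ H.pr _ _) ↔ (I'.pr _ _ ∧ H'.pr _ _)
        rw [hH, hI]
        exact Iff.rfl
      · exact Iff.rfl
  | cmp l c r => exact Iff.rfl

theorem htA_trBLitA_pr {H H' I I' : AInterp (sigPS P S)} (hH : H.pr = H'.pr)
    (hI : I.pr = I'.pr) (x : Sem) (env : ℕ → PTerm) (l : BLit) :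
    htA H I (trBLitA P S x env l) ↔ htA H' I' (trBLitA P S x env l) := by
  obtain ⟨n, af⟩ := l
  have hht := htA_trAFA_pr hH hI env af
  have hsI := satA_trAFA_pr hI env af
  have hsH := satA_trAFA_pr hH env af
  cases n <;> cases x <;>
    simp only [trBLitA, applyNots, AFml.neg, htA, satA] <;>
    simp only [hht, hsI, hsH]

theorem aggSetI_pr_congr (x : Sem) {J J' : AInterp (sigPS P S)} (hpr : J.pr = J'.pr)
    (ss : SetSymbol) (a : Fin ss.gvars.length → PTerm) :
    aggSetI P S x J ss a = aggSetI P S x J' ss a := by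
  unfold aggSetI
  ext t
  simp only [Set.mem_setOf_eq]
  refine exists_congr fun y => and_congr Iff.rfl (forall₂_congr fun l hl => ?_)
  exact satA_trBLitA_pr hpr x _ l

theorem aggSetHT_pr_congr {H H' I I' : AInterp (sigPS P S)} (hH : H.pr = H'.pr)
    (hI : I.pr = I'.pr) (ss : SetSymbol) (a : Fin ss.gvars.length → PTerm) :
    aggSetHT P S H I ss a = aggSetHT P S H' I' ss a := by
  unfold aggSetHT
  ext t
  simp only [Set.mem_setOf_eq]
  refine exists_congr fun y => and_congr Iff.rfl (forall₂_congr fun l hl => ?_)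
  exact htA_trBLitA_pr hH hI Sem.cli _ l

/-! ### The constructed interpretations -/

noncomputable def mkPre (P : Set (ℕ × ℕ)) (S : Set SetSymbol) (A : Set GAtom) :
    AInterp (sigPS P S) where
  setDom := {s | s ⊆ tupDom (sigPS P S)}
  pr := fun p f => (p.val.1, List.ofFn f) ∈ A
  sfn := fun _ _ => ∅

noncomputable def mkI (P : Set (ℕ × ℕ)) (S : Set SetSymbol) (A : Set GAtom) :
    AInterp (sigPS P S) where
  setDom := {s | s ⊆ tupDom (sigPS P S)}
  pr := fun p f => (p.val.1, List.ofFn f) ∈ A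
  sfn := fun f a => aggSetI P S f.1 (mkPre P S A) f.2.val a

noncomputable def mkH (P : Set (ℕ × ℕ)) (S : Set SetSymbol) (A B : Set GAtom) :
    AInterp (sigPS P S) where
  setDom := {s | s ⊆ tupDom (sigPS P S)}
  pr := fun p f => (p.val.1, List.ofFn f) ∈ B
  sfn := fun f a => match f.1 with
    | Sem.cli => aggSetHT P S (mkPre P S B) (mkPre P S A) f.2.val a
    | Sem.dlv => aggSetI P S Sem.dlv (mkPre P S B) f.2.val a

theorem aggSetI_subset_tupDom (x : Sem) (J : AInterp (sigPS P S)) (ss : ↥S)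
    (a : Fin ss.val.gvars.length → PTerm) :
    aggSetI P S x J ss.val a ⊆ tupDom (sigPS P S) := by
  rintro t ⟨y, rfl, _⟩
  refine ⟨ss, ?_⟩
  exact List.length_map _

theorem aggSetHT_subset_tupDom (H I : AInterp (sigPS P S)) (ss : ↥S)
    (a : Fin ss.val.gvars.length → PTerm) :
    aggSetHT P S H I ss.val a ⊆ tupDom (sigPS P S) := by
  rintro t ⟨y, rfl, _⟩
  refine ⟨ss, ?_⟩
  exact List.length_map _

theorem isAggInterp_mkI (A : Set GAtom) : IsAggInterp P S (mkI P S A) := by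
  refine ⟨⟨fun s hs => hs, fun f a => ?_⟩, fun x ss a => ?_⟩
  · show aggSetI P S f.1 (mkPre P S A) f.2.val a ⊆ tupDom (sigPS P S)
    exact aggSetI_subset_tupDom f.1 _ f.2 a
  · show aggSetI P S x (mkPre P S A) ss.val a = aggSetI P S x (mkI P S A) ss.val a
    exact aggSetI_pr_congr x (J := mkPre P S A) (J' := mkI P S A) rfl ss.val a

theorem isAggHT_mk (A B : Set GAtom) (hBA : B ⊆ A) :
    IsAggHT P S (mkH P S A B) (mkI P S A) := by
  refine ⟨⟨rfl, ?_, ?_, ?_⟩, ⟨fun s hs => hs, fun f a => ?_⟩, isAggInterp_mkI A,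
    fun ss a => ?_, fun ss a => ?_⟩
  · intro p _ a h
    exact hBA h
  · intro p hp
    exact absurd (Set.mem_univ p) hp
  · intro f hf
    exact absurd (Set.mem_univ f) hf
  · show (mkH P S A B).sfn f a ⊆ tupDom (sigPS P S)
    obtain ⟨x, ss⟩ := f
    cases x with
    | cli => exact aggSetHT_subset_tupDom _ _ ss a
    | dlv => exact aggSetI_subset_tupDom Sem.dlv _ ss a
  · show aggSetHT P S (mkPre P S B) (mkPre P S A) ss.val a =
      aggSetHT P S (mkH P S A B) (mkI P S A) ss.val a
    exact aggSetHT_pr_congr (H := mkPre P S B) (H' := mkH P S A B) (I := mkPre P S A) (I' := mkI P S A) rfl rfl ss.val a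
  · show aggSetI P S Sem.dlv (mkPre P S B) ss.val a =
      aggSetI P S Sem.dlv (mkH P S A B) ss.val a
    exact aggSetI_pr_congr Sem.dlv (J := mkPre P S B) (J' := mkH P S A B) rfl ss.val a

/-! ### hpr for arbitrary interpretations via AIof -/

theorem pr_cast (I : AInterp (sigPS P S)) (n1 : ℕ) {m n : ℕ} (h : m = n)
    (hm : (n1, m) ∈ P) (hn : (n1, n) ∈ P) (f : Fin n → PTerm) :
    I.pr (⟨(n1, m), hm⟩ : (sigPS P S).PSym) (fun i => f (Fin.cast h i)) ↔
      I.pr (⟨(n1, n), hn⟩ : (sigPS P S).PSym) f := by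
  subst h
  exact Iff.rfl

theorem hpr_AIof (I : AInterp (sigPS P S)) :
    ∀ (p : ↥P) (f : Fin p.val.2 → PTerm),
      I.pr p f ↔ (p.val.1, List.ofFn f) ∈ AIof P S I := by
  rintro ⟨⟨n1, n2⟩, hp⟩ f
  show I.pr (⟨(n1, n2), hp⟩ : (sigPS P S).PSym) f ↔ _
  unfold AIof
  simp only [Set.mem_setOf_eq]
  have h1 : (n1, (List.ofFn f).length) ∈ P := by rw [List.length_ofFn]; exact hp
  have hl : (List.ofFn f).length = n2 := List.length_ofFn
  have key : I.pr (⟨(n1, (List.ofFn f).length), h1⟩ : (sigPS P S).PSym)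
      (fun i => (List.ofFn f).get i) ↔ I.pr (⟨(n1, n2), hp⟩ : (sigPS P S).PSym) f := by
    have hf2 : f = fun j : Fin n2 => (List.ofFn f).get (Fin.cast hl.symm j) := by
      funext j
      simp [List.get_ofFn]
    conv_rhs => rw [hf2]
    exact pr_cast I n1 hl h1 hp (fun j => (List.ofFn f).get (Fin.cast hl.symm j))
  constructor
  · intro h
    exact ⟨h1, key.mpr h⟩
  · rintro ⟨h1', h2⟩
    exact key.mp h2

end Constr
/-! ### Program-level bridge and the final assembly -/

theorem prog_bridge {P : Set (ℕ × ℕ)} {S : Set SetSymbol}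
    (H I : AInterp (sigPS P S)) (CI CH : Set GAtom)
    (hprI : ∀ (p : ↥P) (f : Fin p.val.2 → PTerm), I.pr p f ↔ (p.val.1, List.ofFn f) ∈ CI)
    (hprH : ∀ (p : ↥P) (f : Fin p.val.2 → PTerm), H.pr p f ↔ (p.val.1, List.ofFn f) ∈ CH)
    (hsfnI : ∀ (ss : ↥S) (a : Fin ss.val.gvars.length → PTerm),
      I.sfn ((Sem.dlv, ss) : (sigPS P S).SSym) a = aggSetI P S Sem.dlv I ss.val a)
    (hsfnH : ∀ (ss : ↥S) (a : Fin ss.val.gvars.length → PTerm),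
      H.sfn ((Sem.dlv, ss) : (sigPS P S).SSym) a = aggSetI P S Sem.dlv H ss.val a)
    (Pi : Program) (hOKall : ∀ R ∈ Pi, RuleOK P S R) :
    htSatTh H I (trProgA P S Sem.dlv Pi) ↔ Pair Pi CI CH := by
  constructor
  · intro h
    constructor
    · intro R hR
      exact ((ruleBridge H I CI CH hprI hprH hsfnI hsfnH R (hOKall R hR)).mp
        (h _ ⟨R, hR, rfl⟩)).1
    · intro R hR
      exact ((ruleBridge H I CI CH hprI hprH hsfnI hsfnH R (hOKall R hR)).mp
        (h _ ⟨R, hR, rfl⟩)).2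
  · rintro ⟨h1, h2⟩ F ⟨R, hR, rfl⟩
    exact (ruleBridge H I CI CH hprI hprH hsfnI hsfnH R (hOKall R hR)).mpr
      ⟨h1 R hR, h2 R hR⟩

theorem AIof_mono {P : Set (ℕ × ℕ)} {S : Set SetSymbol} {H I : AInterp (sigPS P S)}
    (hpre : preceqA Set.univ Set.univ H I) : AIof P S H ⊆ AIof P S I := by
  rintro a ⟨h, hpr⟩
  exact ⟨h, hpre.2.1 _ (Set.mem_univ _) _ hpr⟩

/-- Programs `Π₁` and `Π₂` are strongly equivalent for dlv —
i.e. for every program `Δ`, the programs `Π₁ ∪ Δ` and `Π₂ ∪ Δ` have the same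
dlv answer sets — if and only if `τ^dlv(Π₁)` and `τ^dlv(Π₂)` have the same
agg-ht-models over `σ(𝒫,𝒮)`, where `𝒫` and `𝒮` contain all predicate and set
symbols occurring in `Π₁ ∪ Π₂`. -/
theorem stmt15 (Pi1 Pi2 : Program) (P : Set (ℕ × ℕ)) (S : Set SetSymbol)
    (hP : predsOf (Pi1 ∪ Pi2) ⊆ P) (hS : ssymsOf (Pi1 ∪ Pi2) ⊆ S) :
    (∀ (Δ : Program) (A : Set GAtom), dlvAS (Pi1 ∪ Δ) A ↔ dlvAS (Pi2 ∪ Δ) A) ↔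
    (∀ H I : AInterp (sigPS P S), IsAggHT P S H I →
      (htSatTh H I (trProgA P S Sem.dlv Pi1) ↔ htSatTh H I (trProgA P S Sem.dlv Pi2))) := by
  have hOK1 : ∀ R ∈ Pi1, RuleOK P S R := fun R hR => ruleOK_of_mem hP hS (Or.inl hR)
  have hOK2 : ∀ R ∈ Pi2, RuleOK P S R := fun R hR => ruleOK_of_mem hP hS (Or.inr hR)
  rw [prop_SE Pi1 Pi2]
  constructor
  · -- pair condition implies same agg-ht-models
    intro hPC H I hHT
    obtain ⟨hpre, hstdH, hAI, hcli, hdlvH⟩ := hHT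
    have hsfnI : ∀ (ss : ↥S) (a : Fin ss.val.gvars.length → PTerm),
        I.sfn ((Sem.dlv, ss) : (sigPS P S).SSym) a = aggSetI P S Sem.dlv I ss.val a :=
      fun ss a => hAI.2 Sem.dlv ss a
    have hb1 := prog_bridge H I (AIof P S I) (AIof P S H)
      (hpr_AIof I) (hpr_AIof H) hsfnI hdlvH Pi1 hOK1
    have hb2 := prog_bridge H I (AIof P S I) (AIof P S H)
      (hpr_AIof I) (hpr_AIof H) hsfnI hdlvH Pi2 hOK2
    rw [hb1, hb2]
    exact hPC (AIof P S I) (AIof P S H) (AIof_mono hpre)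
  · -- same agg-ht-models implies the pair condition
    intro hRHS A B hBA
    have hHT := isAggHT_mk (P := P) (S := S) A B hBA
    have hprI : ∀ (p : ↥P) (f : Fin p.val.2 → PTerm),
        (mkI P S A).pr p f ↔ (p.val.1, List.ofFn f) ∈ A := fun p f => Iff.rfl
    have hprH : ∀ (p : ↥P) (f : Fin p.val.2 → PTerm),
        (mkH P S A B).pr p f ↔ (p.val.1, List.ofFn f) ∈ B := fun p f => Iff.rfl
    have hsfnI : ∀ (ss : ↥S) (a : Fin ss.val.gvars.length → PTerm),
        (mkI P S A).sfn ((Sem.dlv, ss) : (sigPS P S).SSym) a =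
          aggSetI P S Sem.dlv (mkI P S A) ss.val a :=
      fun ss a => (isAggInterp_mkI A).2 Sem.dlv ss a
    have hsfnH : ∀ (ss : ↥S) (a : Fin ss.val.gvars.length → PTerm),
        (mkH P S A B).sfn ((Sem.dlv, ss) : (sigPS P S).SSym) a =
          aggSetI P S Sem.dlv (mkH P S A B) ss.val a :=
      hHT.2.2.2.2
    have hb1 := prog_bridge (mkH P S A B) (mkI P S A) A B hprI hprH hsfnI hsfnH Pi1 hOK1
    have hb2 := prog_bridge (mkH P S A B) (mkI P S A) A B hprI hprH hsfnI hsfnH Pi2 hOK2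
    rw [← hb1, ← hb2]
    exact hRHS (mkH P S A B) (mkI P S A) hHT
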